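/- (Deterministic core of Theorem 5.1) Under the LSPE setup, suppose additionally that Λ̄₁ is a positive semidefinite d×d matrix with ‖Λ̂₁^{−1/2}Λ̄₁Λ̂₁^{−1/2}‖₂ ≤ α; that for every h ∈ {2,…,H}, ‖Λ̂_h^{−1/2}Φ̄_hᵀΦ̄_hΛ̂_h^{−1/2}‖₂ ≤ B_h for reals B_h ≥ 0; and that for every h ∈ {1,…,H}, ξ_hᵀΦ_hΛ̂_h^{−1}Φ_hᵀξ_h ≤ E and λ²·θ_hᵀΛ̂_h^{−1}θ_h ≤ F for reals E, F ≥ 0. Then (θ̂₁ − θ₁)ᵀ·Λ̄₁·(θ̂₁ − θ₁) ≤ 2H·α·Σ_{h=1}^{H} ( ∏_{h′=2}^{h} B_{h′} )·(E + F), where the empty product (h = 1) is 1 and Λ̂^{1/2} denotes the positive semidefinite square root. -/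

import Mathlib

/-
Measure the error `e_h = θ̂_h - θ_h` in the norm `‖Λ̂_h^{1/2} e_h‖`. By realizability
`e_h = Λ̂_h⁻¹ (Φ_hᵀ ξ_h + Φ_hᵀ Φ̄_{h+1} e_{h+1} - λ θ_h)`; since `Φ_h Λ̂_h⁻¹ Φ_hᵀ ⪯ I`, this gives
`‖Λ̂_h^{1/2} e_h‖ ≤ √E + √F + ‖Φ̄_{h+1} e_{h+1}‖ ≤ √E + √F + √B_{h+1} ‖Λ̂_{h+1}^{1/2} e_{h+1}‖`.
Unrolling from `h = H` (where `Φ̄_{H+1} = 0`) bounds `‖Λ̂_1^{1/2} e_1‖` by a sum of `H` terms;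
Cauchy–Schwarz and `(√E + √F)² ≤ 2(E + F)` bound its square, and the hypothesis on
`Λ̂_1^{-1/2} Λ̄_1 Λ̂_1^{-1/2}` turns that into the claim.
-/

open Matrix

/-- The ridge-regularized covariance matrix `Λ̂ = Φᵀ Φ + λ I`. -/
noncomputable def Lhat {N d : ℕ} (lam : ℝ) (Φ : Matrix (Fin N) (Fin d) ℝ) :
    Matrix (Fin d) (Fin d) ℝ :=
  Φᵀ * Φ + lam • 1

/-- The ℓ₂ operator (spectral) norm of a real matrix, i.e. the operator norm of the induced
linear map between Euclidean spaces. -/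
noncomputable def sNorm {m n : ℕ} (A : Matrix (Fin m) (Fin n) ℝ) : ℝ :=
  ‖LinearMap.toContinuousLinearMap (Matrix.toEuclideanLin A)‖

/- `Fin n → ℝ` carries the sup norm; this is the Euclidean one. -/
noncomputable def euclNorm {ι : Type*} [Fintype ι] (v : ι → ℝ) : ℝ :=
  ‖WithLp.toLp 2 v‖

section EuclNorm

variable {ι : Type*} [Fintype ι]

lemma dotProduct_eq_inner_toLp (v w : ι → ℝ) :
    v ⬝ᵥ w = inner ℝ (WithLp.toLp 2 v) (WithLp.toLp 2 w) := by
  rw [EuclideanSpace.inner_eq_star_dotProduct, star_trivial, dotProduct_comm]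

lemma euclNorm_sq (v : ι → ℝ) : euclNorm v ^ 2 = v ⬝ᵥ v := by
  rw [dotProduct_eq_inner_toLp, real_inner_self_eq_norm_sq, euclNorm]

lemma euclNorm_eq_sqrt (v : ι → ℝ) : euclNorm v = √(v ⬝ᵥ v) := by
  rw [← euclNorm_sq]
  exact (Real.sqrt_sq (norm_nonneg _)).symm

lemma euclNorm_nonneg (v : ι → ℝ) : 0 ≤ euclNorm v := norm_nonneg _

lemma euclNorm_le_sqrt {v : ι → ℝ} {c : ℝ} (h : v ⬝ᵥ v ≤ c) : euclNorm v ≤ √c :=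
  euclNorm_eq_sqrt v ▸ Real.sqrt_le_sqrt h

lemma euclNorm_add_le (v w : ι → ℝ) : euclNorm (v + w) ≤ euclNorm v + euclNorm w :=
  norm_add_le (WithLp.toLp 2 v) (WithLp.toLp 2 w)

lemma euclNorm_sub_le (v w : ι → ℝ) : euclNorm (v - w) ≤ euclNorm v + euclNorm w :=
  norm_sub_le (WithLp.toLp 2 v) (WithLp.toLp 2 w)

end EuclNorm

lemma dotProduct_mulVec_le_sNorm_mul {n : ℕ} (A : Matrix (Fin n) (Fin n) ℝ) (x : Fin n → ℝ) :
    x ⬝ᵥ (A *ᵥ x) ≤ sNorm A * euclNorm x ^ 2 :=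
  calc x ⬝ᵥ (A *ᵥ x) ≤ euclNorm x * euclNorm (A *ᵥ x) := by
        rw [dotProduct_eq_inner_toLp]; exact real_inner_le_norm _ _
    _ ≤ euclNorm x * (sNorm A * euclNorm x) :=
        mul_le_mul_of_nonneg_left
          ((LinearMap.toContinuousLinearMap (toEuclideanLin A)).le_opNorm _) (norm_nonneg _)
    _ = sNorm A * euclNorm x ^ 2 := by ring

section Conjugation

variable {n : Type*} [Fintype n] [DecidableEq n] {S : Matrix n n ℝ}

lemma transpose_inv_of_transpose_eq (hS : Sᵀ = S) : S⁻¹ᵀ = S⁻¹ := by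
  rw [transpose_nonsing_inv, hS]

lemma dotProduct_self_inv_mulVec (hS : Sᵀ = S) (y : n → ℝ) :
    (S⁻¹ *ᵥ y) ⬝ᵥ (S⁻¹ *ᵥ y) = y ⬝ᵥ ((S * S)⁻¹ *ᵥ y) := by
  rw [dotProduct_mulVec, ← mulVec_transpose, transpose_inv_of_transpose_eq hS, mulVec_mulVec,
    ← Matrix.mul_inv_rev, dotProduct_comm]

lemma dotProduct_mulVec_eq_conj (hS : Sᵀ = S) (hdet : IsUnit S.det) (M : Matrix n n ℝ)
    (x : n → ℝ) : x ⬝ᵥ (M *ᵥ x) = (S *ᵥ x) ⬝ᵥ ((S⁻¹ * M * S⁻¹) *ᵥ (S *ᵥ x)) := by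
  have hx : S⁻¹ *ᵥ (S *ᵥ x) = x := by rw [mulVec_mulVec, nonsing_inv_mul _ hdet, one_mulVec]
  rw [← mulVec_mulVec, ← mulVec_mulVec, hx, dotProduct_mulVec (S *ᵥ x), ← mulVec_transpose,
    transpose_inv_of_transpose_eq hS, mulVec_mulVec, nonsing_inv_mul _ hdet, one_mulVec]

end Conjugation

lemma dotProduct_mulVec_le_sNorm_conj_mul {n : ℕ} {S : Matrix (Fin n) (Fin n) ℝ} (hS : Sᵀ = S)
    (hdet : IsUnit S.det) (M : Matrix (Fin n) (Fin n) ℝ) (x : Fin n → ℝ) :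
    x ⬝ᵥ (M *ᵥ x) ≤ sNorm (S⁻¹ * M * S⁻¹) * euclNorm (S *ᵥ x) ^ 2 :=
  dotProduct_mulVec_eq_conj hS hdet M x ▸ dotProduct_mulVec_le_sNorm_mul _ _

section Ridge

variable {N d : ℕ} {lam : ℝ} (Φ : Matrix (Fin N) (Fin d) ℝ)

lemma Lhat_posDef (hlam : 0 < lam) : (Lhat lam Φ).PosDef := by
  refine PosDef.posSemidef_add ?_ ?_
  · rw [← conjTranspose_eq_transpose_of_trivial]
    exact posSemidef_conjTranspose_mul_self Φ
  · rw [smul_one_eq_diagonal]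
    exact posDef_diagonal_iff.mpr fun _ => hlam

lemma isUnit_det_Lhat (hlam : 0 < lam) : IsUnit (Lhat lam Φ).det :=
  (Lhat_posDef Φ hlam).det_pos.ne'.isUnit

lemma Lhat_mulVec (v : Fin d → ℝ) : Lhat lam Φ *ᵥ v = Φᵀ *ᵥ (Φ *ᵥ v) + lam • v := by
  rw [Lhat, add_mulVec, smul_mulVec, one_mulVec, mulVec_mulVec]

lemma Lhat_inv_mulVec_Lhat_mulVec (hlam : 0 < lam) (v : Fin d → ℝ) :
    (Lhat lam Φ)⁻¹ *ᵥ (Lhat lam Φ *ᵥ v) = v := by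
  rw [mulVec_mulVec, nonsing_inv_mul _ (isUnit_det_Lhat Φ hlam), one_mulVec]

lemma dotProduct_transpose_mulVec (v : Fin d → ℝ) (u : Fin N → ℝ) :
    v ⬝ᵥ (Φᵀ *ᵥ u) = (Φ *ᵥ v) ⬝ᵥ u := by
  rw [dotProduct_mulVec, vecMul_transpose]

lemma dotProduct_ridgeHat_mulVec_le (hlam : 0 < lam) (u : Fin N → ℝ) :
    u ⬝ᵥ ((Φ * (Lhat lam Φ)⁻¹ * Φᵀ) *ᵥ u) ≤ u ⬝ᵥ u := by
  -- With `v = Λ̂⁻¹ Φᵀ u` and `w = Φ v`: `⟪w, u⟫ = ‖w‖² + λ‖v‖²`, and `0 ≤ ‖u - w‖²` then gives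
  -- `‖u‖² ≥ 2⟪w, u⟫ - ‖w‖² ≥ ⟪w, u⟫`.
  set v := (Lhat lam Φ)⁻¹ *ᵥ (Φᵀ *ᵥ u)
  set w := Φ *ᵥ v
  have hLv : Lhat lam Φ *ᵥ v = Φᵀ *ᵥ u := by
    rw [mulVec_mulVec, mul_nonsing_inv _ (isUnit_det_Lhat Φ hlam), one_mulVec]
  have hwu : w ⬝ᵥ u = w ⬝ᵥ w + lam * (v ⬝ᵥ v) := by
    rw [← dotProduct_transpose_mulVec, ← hLv, Lhat_mulVec, dotProduct_add,
      dotProduct_transpose_mulVec, dotProduct_smul, smul_eq_mul]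
  have hgoal : u ⬝ᵥ ((Φ * (Lhat lam Φ)⁻¹ * Φᵀ) *ᵥ u) = w ⬝ᵥ u := by
    rw [dotProduct_comm, Matrix.mul_assoc, ← mulVec_mulVec, ← mulVec_mulVec]
  have hv : 0 ≤ v ⬝ᵥ v := euclNorm_sq v ▸ sq_nonneg _
  have huw : 0 ≤ (u - w) ⬝ᵥ (u - w) := euclNorm_sq (u - w) ▸ sq_nonneg _
  rw [sub_dotProduct, dotProduct_sub, dotProduct_sub, dotProduct_comm u w] at huw
  rw [hgoal]
  nlinarith [mul_nonneg hlam.le hv]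

lemma lspe_error_eq (hlam : 0 < lam) {Φbar : Matrix (Fin N) (Fin d) ℝ} {r ξ : Fin N → ℝ}
    {θ θnext θhat θhatNext : Fin d → ℝ} (hreal : r + Φbar *ᵥ θnext = Φ *ᵥ θ + ξ)
    (hθhat : θhat = (Lhat lam Φ)⁻¹ *ᵥ (Φᵀ *ᵥ (r + Φbar *ᵥ θhatNext))) :
    θhat - θ = (Lhat lam Φ)⁻¹ *ᵥ
      (Φᵀ *ᵥ ξ + Φᵀ *ᵥ (Φbar *ᵥ (θhatNext - θnext)) - lam • θ) := by
  have htarget : r + Φbar *ᵥ θhatNext = Φ *ᵥ θ + ξ + Φbar *ᵥ (θhatNext - θnext) := by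
    rw [mulVec_sub, ← hreal]; abel
  calc θhat - θ = (Lhat lam Φ)⁻¹ *ᵥ (Φᵀ *ᵥ (r + Φbar *ᵥ θhatNext))
        - (Lhat lam Φ)⁻¹ *ᵥ (Lhat lam Φ *ᵥ θ) := by
        rw [hθhat, Lhat_inv_mulVec_Lhat_mulVec Φ hlam]
    _ = _ := by
        rw [← mulVec_sub, htarget, Lhat_mulVec, mulVec_add, mulVec_add]
        congr 1
        abel

variable {S : Matrix (Fin d) (Fin d) ℝ}

lemma isUnit_det_of_mul_self_eq_Lhat (hlam : 0 < lam) (hSS : S * S = Lhat lam Φ) :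
    IsUnit S.det := by
  have h := isUnit_det_Lhat Φ hlam
  rw [← hSS, det_mul] at h
  exact isUnit_of_mul_isUnit_left h

lemma euclNorm_sqrt_mulVec_Lhat_inv_le (hlam : 0 < lam) (hS : Sᵀ = S)
    (hSS : S * S = Lhat lam Φ) {ξ u : Fin N → ℝ} {θ : Fin d → ℝ} {E F : ℝ}
    (hE : ξ ⬝ᵥ ((Φ * (Lhat lam Φ)⁻¹ * Φᵀ) *ᵥ ξ) ≤ E)
    (hF : lam ^ 2 * (θ ⬝ᵥ ((Lhat lam Φ)⁻¹ *ᵥ θ)) ≤ F) :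
    euclNorm (S *ᵥ ((Lhat lam Φ)⁻¹ *ᵥ (Φᵀ *ᵥ ξ + Φᵀ *ᵥ u - lam • θ)))
      ≤ √E + √F + euclNorm u := by
  have hSL : S * (Lhat lam Φ)⁻¹ = S⁻¹ := by
    rw [← hSS, Matrix.mul_inv_rev, ← Matrix.mul_assoc,
      mul_nonsing_inv _ (isUnit_det_of_mul_self_eq_Lhat Φ hlam hSS), Matrix.one_mul]
  have hhat : ∀ z : Fin N → ℝ, (S⁻¹ *ᵥ (Φᵀ *ᵥ z)) ⬝ᵥ (S⁻¹ *ᵥ (Φᵀ *ᵥ z))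
      = z ⬝ᵥ ((Φ * (Lhat lam Φ)⁻¹ * Φᵀ) *ᵥ z) := fun z => by
    rw [dotProduct_self_inv_mulVec hS, hSS, dotProduct_comm, dotProduct_transpose_mulVec,
      dotProduct_comm, mulVec_mulVec, mulVec_mulVec, Matrix.mul_assoc]
  have hnoise : euclNorm (S⁻¹ *ᵥ (Φᵀ *ᵥ ξ)) ≤ √E := euclNorm_le_sqrt ((hhat ξ).trans_le hE)
  have hnext : euclNorm (S⁻¹ *ᵥ (Φᵀ *ᵥ u)) ≤ euclNorm u := by
    rw [euclNorm_eq_sqrt u]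
    exact euclNorm_le_sqrt ((hhat u).trans_le (dotProduct_ridgeHat_mulVec_le Φ hlam u))
  have hbias : euclNorm (S⁻¹ *ᵥ (lam • θ)) ≤ √F := by
    refine euclNorm_le_sqrt (le_of_eq_of_le ?_ hF)
    rw [mulVec_smul, dotProduct_smul, smul_dotProduct, dotProduct_self_inv_mulVec hS, hSS,
      smul_eq_mul, smul_eq_mul, ← mul_assoc, sq]
  calc euclNorm (S *ᵥ ((Lhat lam Φ)⁻¹ *ᵥ (Φᵀ *ᵥ ξ + Φᵀ *ᵥ u - lam • θ)))
      = euclNorm (S⁻¹ *ᵥ (Φᵀ *ᵥ ξ) + S⁻¹ *ᵥ (Φᵀ *ᵥ u) - S⁻¹ *ᵥ (lam • θ)) := by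
        rw [mulVec_mulVec, hSL, mulVec_sub, mulVec_add]
    _ ≤ euclNorm (S⁻¹ *ᵥ (Φᵀ *ᵥ ξ)) + euclNorm (S⁻¹ *ᵥ (Φᵀ *ᵥ u))
        + euclNorm (S⁻¹ *ᵥ (lam • θ)) :=
        (euclNorm_sub_le _ _).trans (add_le_add_left (euclNorm_add_le _ _) _)
    _ ≤ √E + euclNorm u + √F := by gcongr
    _ = √E + √F + euclNorm u := add_right_comm _ _ _

end Ridge

lemma euclNorm_mulVec_le_sqrt_mul {n m : ℕ} {S : Matrix (Fin n) (Fin n) ℝ} (hS : Sᵀ = S)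
    (hdet : IsUnit S.det) {A : Matrix (Fin m) (Fin n) ℝ} {B : ℝ}
    (hB : sNorm (S⁻¹ * (Aᵀ * A) * S⁻¹) ≤ B) (x : Fin n → ℝ) :
    euclNorm (A *ᵥ x) ≤ √B * euclNorm (S *ᵥ x) := by
  rw [← Real.sqrt_sq (euclNorm_nonneg (S *ᵥ x)), ← Real.sqrt_mul' _ (sq_nonneg _)]
  refine euclNorm_le_sqrt ?_
  calc (A *ᵥ x) ⬝ᵥ (A *ᵥ x) = x ⬝ᵥ ((Aᵀ * A) *ᵥ x) := by
        rw [← mulVec_mulVec, dotProduct_transpose_mulVec]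
    _ ≤ sNorm (S⁻¹ * (Aᵀ * A) * S⁻¹) * euclNorm (S *ᵥ x) ^ 2 :=
        dotProduct_mulVec_le_sNorm_conj_mul hS hdet _ x
    _ ≤ B * euclNorm (S *ᵥ x) ^ 2 := by gcongr

open Finset in
lemma le_sum_prod_mul_of_le_add_mul {a b : ℕ → ℝ} {c : ℝ} {m H : ℕ} (hmH : m ≤ H)
    (hb : ∀ k, 0 ≤ b k) (hstep : ∀ k, m ≤ k → k < H → a k ≤ c + b (k + 1) * a (k + 1))
    (hlast : a H ≤ c) :
    a m ≤ ∑ k ∈ Icc m H, (∏ j ∈ Icc (m + 1) k, b j) * c := by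
  induction hmH using Nat.decreasingInduction with
  | self => simpa using hlast
  | of_succ k hkH ih =>
    have hprod : ∀ j ∈ Icc (k + 1) H,
        b (k + 1) * ∏ i ∈ Icc (k + 1 + 1) j, b i = ∏ i ∈ Icc (k + 1) j, b i := fun j hj => by
      rw [Icc_add_one_left_eq_Ioc (k + 1), mul_prod_Ioc_eq_prod_Icc (mem_Icc.mp hj).1]
    calc a k ≤ c + b (k + 1) * a (k + 1) := hstep k le_rfl hkH
      _ ≤ c + b (k + 1) * ∑ j ∈ Icc (k + 1) H, (∏ i ∈ Icc (k + 1 + 1) j, b i) * c := by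
        gcongr
        · exact hb _
        · exact ih fun j hj hjH => hstep j (by omega) hjH
      _ = c + ∑ j ∈ Ioc k H, (∏ i ∈ Icc (k + 1) j, b i) * c := by
        rw [← Icc_add_one_left_eq_Ioc, mul_sum]
        exact congrArg _ (sum_congr rfl fun j hj => by rw [← hprod j hj, mul_assoc])
      _ = ∑ j ∈ Icc k H, (∏ i ∈ Icc (k + 1) j, b i) * c := by
        rw [← add_sum_Ioc_eq_sum_Icc hkH.le]
        simp

open Finset in
lemma sq_sum_prod_sqrt_mul_le {B : ℕ → ℝ} {E F : ℝ} {H : ℕ}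
    (hB0 : ∀ h, 2 ≤ h → h ≤ H → 0 ≤ B h) (hE0 : 0 ≤ E) (hF0 : 0 ≤ F) :
    (∑ k ∈ Icc 1 H, (∏ j ∈ Icc 2 k, √(B j)) * (√E + √F)) ^ 2 ≤
      2 * H * ∑ k ∈ Icc 1 H, (∏ j ∈ Icc 2 k, B j) * (E + F) := by
  have hterm : ∀ k ∈ Icc 1 H, ((∏ j ∈ Icc 2 k, √(B j)) * (√E + √F)) ^ 2 ≤
      2 * ((∏ j ∈ Icc 2 k, B j) * (E + F)) := fun k hk => by
    have hprod : (∏ j ∈ Icc 2 k, √(B j)) ^ 2 = ∏ j ∈ Icc 2 k, B j := by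
      rw [← prod_pow]
      refine prod_congr rfl fun j hj => Real.sq_sqrt (hB0 j (mem_Icc.mp hj).1 ?_)
      exact (mem_Icc.mp hj).2.trans (mem_Icc.mp hk).2
    have hnoise : (√E + √F) ^ 2 ≤ 2 * (E + F) := by
      simpa only [Real.sq_sqrt hE0, Real.sq_sqrt hF0] using add_sq_le (a := √E) (b := √F)
    have hprod0 : 0 ≤ ∏ j ∈ Icc 2 k, B j := hprod ▸ sq_nonneg _
    rw [mul_pow, hprod]
    linarith [mul_le_mul_of_nonneg_left hnoise hprod0]
  calc _ ≤ (#(Icc 1 H) : ℝ) * ∑ k ∈ Icc 1 H, ((∏ j ∈ Icc 2 k, √(B j)) * (√E + √F)) ^ 2 :=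
        sq_sum_le_card_mul_sum_sq
    _ ≤ H * ∑ k ∈ Icc 1 H, 2 * ((∏ j ∈ Icc 2 k, B j) * (E + F)) := by
        rw [Nat.card_Icc, Nat.add_sub_cancel]
        gcongr with k hk
        exact hterm k hk
    _ = _ := by rw [← mul_sum]; ring

theorem stmt9_general (N d H : ℕ) (hH : 1 ≤ H) (lam : ℝ) (hlam : 0 < lam)
    (Φ Φbar : ℕ → Matrix (Fin N) (Fin d) ℝ) (r ξ : ℕ → Fin N → ℝ)
    (θ θhat : ℕ → Fin d → ℝ)
    (hΦbar : Φbar (H + 1) = 0)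
    (hreal : ∀ h, 1 ≤ h → h ≤ H →
      r h + Φbar (h + 1) *ᵥ θ (h + 1) = Φ h *ᵥ θ h + ξ h)
    (hθhat : ∀ h, 1 ≤ h → h ≤ H →
      θhat h = (Lhat lam (Φ h))⁻¹ *ᵥ ((Φ h)ᵀ *ᵥ (r h + Φbar (h + 1) *ᵥ θhat (h + 1))))
    (S : ℕ → Matrix (Fin d) (Fin d) ℝ)
    (hS : ∀ h, 1 ≤ h → h ≤ H → (S h).PosSemidef ∧ S h * S h = Lhat lam (Φ h))
    (Λbar1 : Matrix (Fin d) (Fin d) ℝ)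
    (α : ℝ) (hα : sNorm ((S 1)⁻¹ * Λbar1 * (S 1)⁻¹) ≤ α)
    (B : ℕ → ℝ) (hB0 : ∀ h, 2 ≤ h → h ≤ H → 0 ≤ B h)
    (hB : ∀ h, 2 ≤ h → h ≤ H →
      sNorm ((S h)⁻¹ * ((Φbar h)ᵀ * Φbar h) * (S h)⁻¹) ≤ B h)
    (E F : ℝ) (hE0 : 0 ≤ E) (hF0 : 0 ≤ F)
    (hE : ∀ h, 1 ≤ h → h ≤ H →
      ξ h ⬝ᵥ ((Φ h * (Lhat lam (Φ h))⁻¹ * (Φ h)ᵀ) *ᵥ ξ h) ≤ E)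
    (hF : ∀ h, 1 ≤ h → h ≤ H →
      lam ^ 2 * (θ h ⬝ᵥ ((Lhat lam (Φ h))⁻¹ *ᵥ θ h)) ≤ F) :
    (θhat 1 - θ 1) ⬝ᵥ (Λbar1 *ᵥ (θhat 1 - θ 1)) ≤
      2 * H * α * ∑ h ∈ Finset.Icc 1 H, (∏ h' ∈ Finset.Icc 2 h, B h') * (E + F) := by
  have hsym : ∀ h, 1 ≤ h → h ≤ H → (S h)ᵀ = S h := fun h h1 h2 => by
    simpa only [IsHermitian, conjTranspose_eq_transpose_of_trivial] using
      (hS h h1 h2).1.isHermitian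
  have hdet : ∀ h, 1 ≤ h → h ≤ H → IsUnit (S h).det := fun h h1 h2 =>
    isUnit_det_of_mul_self_eq_Lhat (Φ h) hlam (hS h h1 h2).2
  have hstep : ∀ h, 1 ≤ h → h ≤ H → euclNorm (S h *ᵥ (θhat h - θ h)) ≤
      √E + √F + euclNorm (Φbar (h + 1) *ᵥ (θhat (h + 1) - θ (h + 1))) := fun h h1 h2 => by
    rw [lspe_error_eq (Φ h) hlam (hreal h h1 h2) (hθhat h h1 h2)]
    exact euclNorm_sqrt_mulVec_Lhat_inv_le (Φ h) hlam (hsym h h1 h2) (hS h h1 h2).2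
      (hE h h1 h2) (hF h h1 h2)
  have hrec : euclNorm (S 1 *ᵥ (θhat 1 - θ 1)) ≤
      ∑ k ∈ Finset.Icc 1 H, (∏ j ∈ Finset.Icc 2 k, √(B j)) * (√E + √F) := by
    refine le_sum_prod_mul_of_le_add_mul hH (fun _ => Real.sqrt_nonneg _)
      (fun k hk hkH => (hstep k hk hkH.le).trans ?_) ?_
    · gcongr
      exact euclNorm_mulVec_le_sqrt_mul (hsym _ (by omega) hkH) (hdet _ (by omega) hkH)
        (hB _ (by omega) hkH) _
    · simpa [hΦbar, euclNorm] using hstep H hH le_rfl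
  have hα0 : 0 ≤ α := (norm_nonneg _).trans hα
  calc (θhat 1 - θ 1) ⬝ᵥ (Λbar1 *ᵥ (θhat 1 - θ 1))
      ≤ sNorm ((S 1)⁻¹ * Λbar1 * (S 1)⁻¹) * euclNorm (S 1 *ᵥ (θhat 1 - θ 1)) ^ 2 :=
        dotProduct_mulVec_le_sNorm_conj_mul (hsym 1 le_rfl hH) (hdet 1 le_rfl hH) _ _
    _ ≤ α * (∑ k ∈ Finset.Icc 1 H, (∏ j ∈ Finset.Icc 2 k, √(B j)) * (√E + √F)) ^ 2 := by
        gcongr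
        exact euclNorm_nonneg _
    _ ≤ α * (2 * H * ∑ h ∈ Finset.Icc 1 H, (∏ h' ∈ Finset.Icc 2 h, B h') * (E + F)) := by
        gcongr
        exact sq_sum_prod_sqrt_mul_le hB0 hE0 hF0
    _ = _ := by ring

/-- Deterministic core of Theorem 5.1. Under the LSPE setup, if `Λ̄₁` is positive semidefinite
with `‖Λ̂₁^{-1/2} Λ̄₁ Λ̂₁^{-1/2}‖₂ ≤ α`, if `‖Λ̂_h^{-1/2} Φ̄_hᵀ Φ̄_h Λ̂_h^{-1/2}‖₂ ≤ B_h` for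
`h ∈ {2,…,H}` with `B_h ≥ 0`, and if `ξ_hᵀ Φ_h Λ̂_h⁻¹ Φ_hᵀ ξ_h ≤ E` and
`λ² θ_hᵀ Λ̂_h⁻¹ θ_h ≤ F` for `h ∈ {1,…,H}` with `E, F ≥ 0`, then
`(θ̂₁ - θ₁)ᵀ Λ̄₁ (θ̂₁ - θ₁) ≤ 2 H α ∑_{h=1}^H (∏_{h'=2}^h B_{h'}) (E + F)`.
Here `S h` denotes the positive semidefinite square root `Λ̂_h^{1/2}`. -/
theorem stmt9 (N d H : ℕ) (hH : 1 ≤ H) (lam : ℝ) (hlam : 0 < lam)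
    (Φ Φbar : ℕ → Matrix (Fin N) (Fin d) ℝ) (r ξ : ℕ → Fin N → ℝ)
    (θ θhat : ℕ → Fin d → ℝ)
    (hΦbar : Φbar (H + 1) = 0) (hθ : θ (H + 1) = 0)
    (hreal : ∀ h, 1 ≤ h → h ≤ H →
      r h + Φbar (h + 1) *ᵥ θ (h + 1) = Φ h *ᵥ θ h + ξ h)
    (hθhat0 : θhat (H + 1) = 0)
    (hθhat : ∀ h, 1 ≤ h → h ≤ H →
      θhat h = (Lhat lam (Φ h))⁻¹ *ᵥ ((Φ h)ᵀ *ᵥ (r h + Φbar (h + 1) *ᵥ θhat (h + 1))))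
    (S : ℕ → Matrix (Fin d) (Fin d) ℝ)
    (hS : ∀ h, 1 ≤ h → h ≤ H → (S h).PosSemidef ∧ S h * S h = Lhat lam (Φ h))
    (Λbar1 : Matrix (Fin d) (Fin d) ℝ) (hΛbar1 : Λbar1.PosSemidef)
    (α : ℝ) (hα : sNorm ((S 1)⁻¹ * Λbar1 * (S 1)⁻¹) ≤ α)
    (B : ℕ → ℝ) (hB0 : ∀ h, 2 ≤ h → h ≤ H → 0 ≤ B h)
    (hB : ∀ h, 2 ≤ h → h ≤ H →
      sNorm ((S h)⁻¹ * ((Φbar h)ᵀ * Φbar h) * (S h)⁻¹) ≤ B h)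
    (E F : ℝ) (hE0 : 0 ≤ E) (hF0 : 0 ≤ F)
    (hE : ∀ h, 1 ≤ h → h ≤ H →
      ξ h ⬝ᵥ ((Φ h * (Lhat lam (Φ h))⁻¹ * (Φ h)ᵀ) *ᵥ ξ h) ≤ E)
    (hF : ∀ h, 1 ≤ h → h ≤ H →
      lam ^ 2 * (θ h ⬝ᵥ ((Lhat lam (Φ h))⁻¹ *ᵥ θ h)) ≤ F) :
    (θhat 1 - θ 1) ⬝ᵥ (Λbar1 *ᵥ (θhat 1 - θ 1)) ≤
      2 * H * α * ∑ h ∈ Finset.Icc 1 H, (∏ h' ∈ Finset.Icc 2 h, B h') * (E + F) :=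
  stmt9_general N d H hH lam hlam Φ Φbar r ξ θ θhat hΦbar hreal hθhat S hS Λbar1 α hα B hB0 hB E F
    hE0 hF0 hE hF
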